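/- Let X and Y be nonempty words over the alphabet {L, M, R} satisfying XY = ȲX. Then either X and Y both consist entirely of the letter M (X = M^{|X|} and Y = M^{|Y|}), or there exist a nonempty word E and integers p ≥ 1 and q ≥ 0 such that Y = (EĒ)^p and X = (ĒE)^q Ē. -/
import Mathlib


/-- The three-letter alphabet {L, M, R}. -/
inductive Letter : Type
  | L | M | R
deriving DecidableEq, Repr

/-- Complementation on letters: R̄ = L, L̄ = R, M̄ = M. -/
def Letter.bar : Letter → Letter
  | .L => .R
  | .M => .M
  | .R => .L

/-- Complement of a word (letterwise). -/
def comp (w : List Letter) : List Letter := w.map Letter.bar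

/-- k-fold concatenation of a word with itself. -/
def npow (w : List Letter) : ℕ → List Letter
  | 0 => []
  | n + 1 => w ++ npow w n

lemma bar_bar (a : Letter) : a.bar.bar = a := by cases a <;> rfl

lemma comp_append (a b : List Letter) : comp (a ++ b) = comp a ++ comp b := by
  simp [comp]

lemma comp_comp (w : List Letter) : comp (comp w) = w := by
  induction w with
  | nil => rfl
  | cons a t ih =>
    show (a.bar.bar) :: comp (comp t) = a :: t
    rw [bar_bar, ih]

lemma length_comp (w : List Letter) : (comp w).length = w.length := by simp [comp]

lemma comp_ne_nil {w : List Letter} (h : w ≠ []) : comp w ≠ [] := by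
  simpa [comp] using h

lemma npowW_add (w : List Letter) (m n : ℕ) :
    npow w (m + n) = npow w m ++ npow w n := by
  induction m with
  | zero => simp [npow]
  | succ m ih => simp [npow, Nat.succ_add, ih]

lemma npowW_one (w : List Letter) : npow w 1 = w := by simp [npow]

lemma npow_snoc (w : List Letter) (m : ℕ) : npow w m ++ w = npow w (m + 1) := by
  rw [npowW_add, npowW_one]

lemma comp_npow (w : List Letter) (n : ℕ) : comp (npow w n) = npow (comp w) n := by
  induction n with
  | zero => rfl
  | succ n ih => simp [npow, comp_append, ih]

lemma shift (E : List Letter) (m : ℕ) :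
    E ++ npow (comp E ++ E) m = npow (E ++ comp E) m ++ E := by
  induction m with
  | zero => simp [npow]
  | succ m ih =>
    show E ++ ((comp E ++ E) ++ npow (comp E ++ E) m)
        = ((E ++ comp E) ++ npow (E ++ comp E) m) ++ E
    calc E ++ ((comp E ++ E) ++ npow (comp E ++ E) m)
        = (E ++ comp E) ++ (E ++ npow (comp E ++ E) m) := by simp [List.append_assoc]
      _ = (E ++ comp E) ++ (npow (E ++ comp E) m ++ E) := by rw [ih]
      _ = ((E ++ comp E) ++ npow (E ++ comp E) m) ++ E := by simp [List.append_assoc]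

lemma glue (E : List Letter) (q p : ℕ) :
    npow (E ++ comp E) q ++ E ++ npow (comp E ++ E) p
      = npow (E ++ comp E) (q + p) ++ E := by
  rw [npowW_add]
  simp only [List.append_assoc]
  rw [shift]

lemma eq_replicate_of_comp_fix {w : List Letter} (h : comp w = w) :
    w = List.replicate w.length Letter.M := by
  induction w with
  | nil => rfl
  | cons a t ih =>
    have h' : a.bar :: comp t = a :: t := h
    injection h' with h1 h2
    have ha : a = Letter.M := by cases a <;> first | rfl | exact absurd h1 (by decide)
    rw [List.length_cons, List.replicate_succ, ← ih h2, ha]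

theorem key : ∀ n : ℕ, ∀ X Y : List Letter, X.length + Y.length ≤ n → X ≠ [] → Y ≠ [] →
    X ++ Y = comp Y ++ X →
    (comp X = X ∧ comp Y = Y) ∨
    ∃ (E : List Letter) (p q : ℕ), E ≠ [] ∧ 1 ≤ p ∧
      Y = npow (E ++ comp E) p ∧ X = npow (comp E ++ E) q ++ comp E := by
  intro n
  induction n using Nat.strong_induction_on with
  | _ n IH =>
    intro X Y hn hX hY heq
    have hYpos : 0 < Y.length := List.length_pos_iff.mpr hY
    have hXpos : 0 < X.length := List.length_pos_iff.mpr hX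
    rcases le_or_gt Y.length X.length with hlen | hlen
    · -- |Y| ≤ |X| : strip comp Y from X
      have htake : X.take Y.length = comp Y := by
        have h1 := congrArg (List.take Y.length) heq
        rw [List.take_append_of_le_length hlen] at h1
        rw [h1, ← length_comp Y, List.take_left]
      set X' := X.drop Y.length with hX'def
      have hXsplit : X = comp Y ++ X' := by
        rw [← htake]; exact (List.take_append_drop Y.length X).symm
      have heq' : X' ++ Y = comp Y ++ X' := by
        apply List.append_cancel_left (as := comp Y)
        calc comp Y ++ (X' ++ Y) = (comp Y ++ X') ++ Y := by rw [List.append_assoc]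
          _ = X ++ Y := by rw [← hXsplit]
          _ = comp Y ++ X := heq
          _ = comp Y ++ (comp Y ++ X') := by rw [← hXsplit]
      have hlenX : X.length = Y.length + X'.length := by
        rw [hXsplit]; simp [length_comp]
      by_cases hX'nil : X' = []
      · rw [hX'nil, List.append_nil] at hXsplit
        have hYfix : comp Y = Y := by
          have h2 := heq
          rw [hXsplit] at h2
          exact (List.append_cancel_left h2).symm
        left
        exact ⟨by rw [hXsplit, hYfix, hYfix], hYfix⟩
      · have hm : X'.length + Y.length < n := by omega
        rcases IH _ hm X' Y le_rfl hX'nil hY heq' with ⟨hX'M, hYM⟩ | ⟨E, p, q, hE, hp, hYe, hX'e⟩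
        · left
          refine ⟨?_, hYM⟩
          rw [hXsplit, comp_append, comp_comp, hX'M, hYM]
        · right
          refine ⟨E, p, p + q, hE, hp, hYe, ?_⟩
          rw [hXsplit, hYe, hX'e, comp_npow, comp_append, comp_comp, npowW_add]
          simp [List.append_assoc]
    · -- |X| < |Y|
      have hxk : (comp Y).take X.length = X := by
        have h1 := congrArg (List.take X.length) heq
        rw [List.take_left] at h1
        rw [List.take_append_of_le_length (by rw [length_comp]; omega)] at h1
        exact h1.symm
      set W := (comp Y).drop X.length with hWdef
      have hcY : comp Y = X ++ W := by
        rw [← hxk]; exact (List.take_append_drop X.length (comp Y)).symm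
      have hlenW : W.length = Y.length - X.length := by
        rw [hWdef, List.length_drop, length_comp]
      have hWne : W ≠ [] := by
        intro h
        rw [h] at hlenW
        simp at hlenW
        omega
      have hYW : Y = W ++ X := by
        apply List.append_cancel_left (as := X)
        rw [heq, hcY, List.append_assoc]
      have hYc : Y = comp X ++ comp W := by
        conv_lhs => rw [← comp_comp Y, hcY, comp_append]
      have hWX : W ++ X = comp X ++ comp W := hYW.symm.trans hYc
      rcases lt_trichotomy W.length X.length with h2b | h2a | h2c
      · -- |W| < |X| : comp X = W ++ Z
        have hztake : (comp X).take W.length = W := by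
          have h1 := congrArg (List.take W.length) hWX
          rw [List.take_left] at h1
          rw [List.take_append_of_le_length (by rw [length_comp]; omega)] at h1
          exact h1.symm
        set Z := (comp X).drop W.length with hZdef
        have hcX : comp X = W ++ Z := by
          rw [← hztake]; exact (List.take_append_drop W.length (comp X)).symm
        have hlenZ : Z.length = X.length - W.length := by
          rw [hZdef, List.length_drop, length_comp]
        have hZne : Z ≠ [] := by
          intro h; rw [h] at hlenZ; simp at hlenZ; omega
        have hXc : X = comp W ++ comp Z := by
          conv_lhs => rw [← comp_comp X, hcX, comp_append]
        have h1 : comp W ++ comp Z = Z ++ comp W := by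
          apply List.append_cancel_left (as := W)
          calc W ++ (comp W ++ comp Z) = W ++ X := by rw [← hXc]
            _ = comp X ++ comp W := hWX
            _ = (W ++ Z) ++ comp W := by rw [hcX]
            _ = W ++ (Z ++ comp W) := by rw [List.append_assoc]
        have heq2 : W ++ Z = comp Z ++ W := by
          have h2 := congrArg comp h1
          rw [comp_append, comp_append, comp_comp, comp_comp] at h2
          exact h2
        have hm : W.length + Z.length < n := by omega
        rcases IH _ hm W Z le_rfl hWne hZne heq2 with ⟨hWM, hZM⟩ | ⟨E, p, q, hE, hp, hZe, hWe⟩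
        · left
          have hXfix : comp X = X := by rw [hcX, hXc, hWM, hZM]
          refine ⟨hXfix, ?_⟩
          rw [hYW, comp_append, hXfix, hWM]
        · right
          have hXnew : X = npow (E ++ comp E) (q + p) ++ E := by
            simp only [hXc, hWe, hZe, comp_append, comp_npow, comp_comp]
            exact glue E q p
          have hg : npow (comp E ++ E) q ++ comp E ++ npow (E ++ comp E) (q + p)
              = npow (comp E ++ E) (q + (q + p)) ++ comp E := by
            have h3 := glue (comp E) q (q + p)
            rwa [comp_comp] at h3
          refine ⟨comp E, q + (q + p) + 1, q + p, comp_ne_nil hE, by omega, ?_, ?_⟩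
          · rw [comp_comp, hYW, hXnew, hWe]
            calc npow (comp E ++ E) q ++ comp E ++ (npow (E ++ comp E) (q + p) ++ E)
                = (npow (comp E ++ E) q ++ comp E ++ npow (E ++ comp E) (q + p)) ++ E := by
                  simp [List.append_assoc]
              _ = (npow (comp E ++ E) (q + (q + p)) ++ comp E) ++ E := by rw [hg]
              _ = npow (comp E ++ E) (q + (q + p)) ++ (comp E ++ E) := by
                  simp [List.append_assoc]
              _ = npow (comp E ++ E) (q + (q + p) + 1) := npow_snoc _ _
          · rw [comp_comp]
            exact hXnew
      · -- |W| = |X| : W = comp X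
        obtain ⟨hW1, hX1⟩ := List.append_inj hWX (by rw [length_comp]; exact h2a)
        right
        refine ⟨W, 1, 0, hWne, le_refl 1, ?_, ?_⟩
        · rw [npowW_one, hYW, hW1, hX1, comp_comp]
        · show X = npow (comp W ++ W) 0 ++ comp W
          simpa [npow] using hX1
      · -- |X| < |W| : W = comp X ++ V
        have hvtake : W.take X.length = comp X := by
          have h1 := congrArg (List.take X.length) hWX
          rw [List.take_append_of_le_length (le_of_lt h2c)] at h1
          rw [← length_comp X, List.take_left] at h1
          rw [length_comp] at h1
          exact h1
        set V := W.drop X.length with hVdef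
        have hWsplit : W = comp X ++ V := by
          rw [← hvtake]; exact (List.take_append_drop X.length W).symm
        have hlenV : V.length = W.length - X.length := by
          rw [hVdef, List.length_drop]
        have hVne : V ≠ [] := by
          intro h; rw [h] at hlenV; simp at hlenV; omega
        have h1 : V ++ X = X ++ comp V := by
          apply List.append_cancel_left (as := comp X)
          calc comp X ++ (V ++ X) = (comp X ++ V) ++ X := by rw [List.append_assoc]
            _ = W ++ X := by rw [← hWsplit]
            _ = comp X ++ comp W := hWX
            _ = comp X ++ (X ++ comp V) := by rw [hWsplit, comp_append, comp_comp]
        have heq2 : X ++ comp V = comp (comp V) ++ X := by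
          rw [comp_comp]; exact h1.symm
        have hm : X.length + (comp V).length < n := by
          rw [length_comp]; omega
        rcases IH _ hm X (comp V) le_rfl hX (comp_ne_nil hVne) heq2 with
          ⟨hXM, hVM⟩ | ⟨E, p, q, hE, hp, hVe, hXe⟩
        · left
          have hVfix : comp V = V := by
            rw [comp_comp] at hVM
            exact hVM.symm
          have hWfix : comp W = W := by
            rw [hWsplit, comp_append, comp_comp, hVfix, hXM]
          exact ⟨hXM, by rw [hYW, comp_append, hWfix, hXM]⟩
        · right
          have hVeq : V = npow (comp E ++ E) p := by
            rw [← comp_comp V, hVe, comp_npow, comp_append, comp_comp]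
          have hcXe : comp X = npow (E ++ comp E) q ++ E := by
            simp only [hXe, comp_append, comp_npow, comp_comp]
          refine ⟨E, q + (p + q) + 1, q, hE, by omega, ?_, hXe⟩
          rw [hYW, hWsplit, hcXe, hVeq, hXe]
          calc ((npow (E ++ comp E) q ++ E) ++ npow (comp E ++ E) p) ++
                (npow (comp E ++ E) q ++ comp E)
              = (npow (E ++ comp E) q ++ E ++ npow (comp E ++ E) (p + q)) ++ comp E := by
                rw [npowW_add]; simp [List.append_assoc]
            _ = (npow (E ++ comp E) (q + (p + q)) ++ E) ++ comp E := by rw [glue]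
            _ = npow (E ++ comp E) (q + (p + q)) ++ (E ++ comp E) := by
                simp [List.append_assoc]
            _ = npow (E ++ comp E) (q + (p + q) + 1) := npow_snoc _ _

theorem stmt_6 (X Y : List Letter) (hX : X ≠ []) (hY : Y ≠ [])
    (heq : X ++ Y = comp Y ++ X) :
    (X = List.replicate X.length Letter.M ∧ Y = List.replicate Y.length Letter.M) ∨
    ∃ (E : List Letter) (p q : ℕ), E ≠ [] ∧ 1 ≤ p ∧
      Y = npow (E ++ comp E) p ∧ X = npow (comp E ++ E) q ++ comp E := by
  rcases key (X.length + Y.length) X Y le_rfl hX hY heq with ⟨h1, h2⟩ | h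
  · exact Or.inl ⟨eq_replicate_of_comp_fix h1, eq_replicate_of_comp_fix h2⟩
  · exact Or.inr h
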